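/- arXiv:1611.03539 — 6 statements merged into one kernel-verified Lean document; each statement's English description precedes it below -/
import Mathlib

section
/- Let E, ε, M ∈ ℝ with M ≠ 0, let f : [0,∞) → ℝ be continuous, and let V : ℝ → ℝ be continuous and bounded below. Let r : (t₁, t₂) → ℝ (with −∞ ≤ t₁ < t₂ ≤ +∞) be a positive C² solution of the radial equation r''(t) = 2(V(t) − E) r(t) + 2ε f(r(t)²) r(t) + M²/r(t)³. Then r(t) does not tend to 0 as t → t₂ (whether t₂ is finite or +∞), and r(t) does not tend to 0 as t → t₁ (whether t₁ is finite or −∞). -/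
/-!
Near an endpoint where `r → 0`, the potential and nonlinear terms of the force are `O(r)` while
the centrifugal term `M²/r³` blows up, so eventually `r'' ≥ M²/(2r³) > 0`. Then `r'` increases,
and since `r` tends to `0` it must be decreasing, `r' < 0`. Along such a motion the energy
`r'²/2 + M²/(4r²)` has derivative `r' (r'' - M²/(2r³)) ≤ 0`, so it is bounded, which keeps `r`
away from `0`. The left endpoint is reduced to the right one by reversing time.
-/

open Set Filter Topology

noncomputable def radialForce (E ε M : ℝ) (f V : ℝ → ℝ) (t x : ℝ) : ℝ :=
  2 * (V t - E) * x + 2 * ε * f (x ^ 2) * x + M ^ 2 / x ^ 3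

lemma exists_pos_centrifugal_le_radialForce (E ε : ℝ) {M c : ℝ} (hM : M ≠ 0) {f V : ℝ → ℝ}
    (hf : ContinuousOn f (Icc 0 1)) (hV : ∀ t, c ≤ V t) :
    ∃ η > 0, ∀ t x, 0 < x → x < η → M ^ 2 / (2 * x ^ 3) ≤ radialForce E ε M f V t x := by
  obtain ⟨B, hB⟩ := isCompact_Icc.exists_bound_of_continuousOn hf
  have hB0 : 0 ≤ B := (norm_nonneg _).trans (hB 0 ⟨le_rfl, zero_le_one⟩)
  set K := 2 * |c - E| + 2 * |ε| * B
  have hM2 : 0 < M ^ 2 := by positivity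
  refine ⟨min 1 (M ^ 2 / (2 * (K + 1))), lt_min one_pos (by positivity), fun t x hx hxη => ?_⟩
  have hx1 : x ≤ 1 := (hxη.trans_le (min_le_left _ _)).le
  have hxM : x * (2 * (K + 1)) < M ^ 2 :=
    (lt_div_iff₀ (by positivity)).1 (hxη.trans_le (min_le_right _ _))
  have hregular : -(K * x) ≤ 2 * (V t - E) * x + 2 * ε * f (x ^ 2) * x := by
    have hfx : |ε * f (x ^ 2)| ≤ |ε| * B := by
      rw [abs_mul]
      exact mul_le_mul_of_nonneg_left (hB _ ⟨by positivity, pow_le_one₀ hx.le hx1⟩) (abs_nonneg ε)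
    nlinarith [neg_abs_le (c - E), neg_abs_le (ε * f (x ^ 2)), hV t]
  have hcentrifugal : K * x ≤ M ^ 2 / (2 * x ^ 3) := by
    rw [le_div_iff₀ (by positivity)]
    nlinarith [pow_le_one₀ hx.le hx1 (n := 3), mul_pos hx (by positivity : (0 : ℝ) < K + 1)]
  have hsplit : M ^ 2 / x ^ 3 = 2 * (M ^ 2 / (2 * x ^ 3)) := by field_simp
  unfold radialForce
  linarith

lemma hasDerivAt_centrifugalEnergy (M : ℝ) {r r' r'' : ℝ → ℝ} {t : ℝ}
    (hr : HasDerivAt r (r' t) t) (hr' : HasDerivAt r' (r'' t) t) (ht : r t ≠ 0) :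
    HasDerivAt (fun s => r' s ^ 2 / 2 + M ^ 2 / (4 * r s ^ 2))
      (r' t * (r'' t - M ^ 2 / (2 * r t ^ 3))) t := by
  refine (((hr'.fun_pow 2).div_const 2).add
    ((hasDerivAt_const t (M ^ 2)).div ((hr.fun_pow 2).const_mul 4) (by positivity))).congr_deriv ?_
  field_simp
  ring

lemma monotoneOn_of_hasDerivAt_nonneg {D : Set ℝ} (hD : Convex ℝ D) {g g' : ℝ → ℝ}
    (hg : ∀ x ∈ D, HasDerivAt g (g' x) x) (hg' : ∀ x ∈ D, 0 ≤ g' x) : MonotoneOn g D :=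
  monotoneOn_of_hasDerivWithinAt_nonneg hD (fun x hx => (hg x hx).continuousAt.continuousWithinAt)
    (fun x hx => (hg x (interior_subset hx)).hasDerivWithinAt)
    fun x hx => hg' x (interior_subset hx)

lemma antitoneOn_of_hasDerivAt_nonpos {D : Set ℝ} (hD : Convex ℝ D) {g g' : ℝ → ℝ}
    (hg : ∀ x ∈ D, HasDerivAt g (g' x) x) (hg' : ∀ x ∈ D, g' x ≤ 0) : AntitoneOn g D :=
  antitoneOn_of_hasDerivWithinAt_nonpos hD (fun x hx => (hg x hx).continuousAt.continuousWithinAt)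
    (fun x hx => (hg x (interior_subset hx)).hasDerivWithinAt)
    fun x hx => hg' x (interior_subset hx)

section Endpoint

variable {J : Set ℝ} {l : Filter ℝ} {r r' r'' : ℝ → ℝ}

lemma neg_of_hasDerivAt_of_tendsto_zero [l.NeBot] (hJ : Convex ℝ J) (hJl : J ∈ l)
    (hfwd : ∀ t₀ ∈ J, ∀ᶠ t in l, t₀ < t) (hpos : ∀ t ∈ J, 0 < r t)
    (hr : ∀ t ∈ J, HasDerivAt r (r' t) t) (hr' : MonotoneOn r' J) (h0 : Tendsto r l (𝓝 0)) :
    ∀ t ∈ J, r' t < 0 := by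
  intro b hb
  by_contra! hb0
  have hmono : MonotoneOn r (J ∩ Ici b) :=
    monotoneOn_of_hasDerivAt_nonneg (hJ.inter (convex_Ici b)) (fun t ht => hr t ht.1)
      fun t ht => hb0.trans (hr' hb ht.1 ht.2)
  have hlarge : ∀ᶠ t in l, r b ≤ r t := by
    filter_upwards [hfwd b hb, hJl] with t hbt ht
    exact hmono ⟨hb, mem_Ici.2 le_rfl⟩ ⟨ht, hbt.le⟩ hbt.le
  obtain ⟨t, hlarge, hsmall⟩ := (hlarge.and (h0.eventually_lt_const (hpos b hb))).exists
  exact hlarge.not_gt hsmall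

theorem not_tendsto_zero_of_centrifugal_le [l.NeBot] {M : ℝ} (hM : M ≠ 0) (hJ : Convex ℝ J)
    (hJl : J ∈ l) (hfwd : ∀ t₀ ∈ J, ∀ᶠ t in l, t₀ < t) (hpos : ∀ t ∈ J, 0 < r t)
    (hr : ∀ t ∈ J, HasDerivAt r (r' t) t) (hr' : ∀ t ∈ J, HasDerivAt r' (r'' t) t)
    (hforce : ∀ t ∈ J, M ^ 2 / (2 * r t ^ 3) ≤ r'' t) : ¬ Tendsto r l (𝓝 0) := by
  intro h0
  have hM2 : 0 < M ^ 2 := by positivity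
  have hr'mono : MonotoneOn r' J := monotoneOn_of_hasDerivAt_nonneg hJ hr' fun t ht =>
    (div_pos hM2 (by have := hpos t ht; positivity)).le.trans (hforce t ht)
  have hr'neg := neg_of_hasDerivAt_of_tendsto_zero hJ hJl hfwd hpos hr hr'mono h0
  set G : ℝ → ℝ := fun s => r' s ^ 2 / 2 + M ^ 2 / (4 * r s ^ 2)
  have hGanti : AntitoneOn G J :=
    antitoneOn_of_hasDerivAt_nonpos hJ
      (fun t ht => hasDerivAt_centrifugalEnergy M (hr t ht) (hr' t ht) (hpos t ht).ne')
      fun t ht => mul_nonpos_of_nonpos_of_nonneg (hr'neg t ht).le (sub_nonneg.2 (hforce t ht))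
  obtain ⟨t₀, ht₀⟩ := Filter.nonempty_of_mem hJl
  have hG₀ : 0 < G t₀ := by have := hpos t₀ ht₀; positivity
  have hbounded : ∀ᶠ t in l, M ^ 2 / (4 * G t₀) ≤ r t ^ 2 := by
    filter_upwards [hfwd t₀ ht₀, hJl] with t ht₀t ht
    have hrt := hpos t ht
    have : M ^ 2 / (4 * r t ^ 2) ≤ G t₀ :=
      (le_add_of_nonneg_left (by positivity)).trans (hGanti ht₀ ht ht₀t.le)
    rw [div_le_iff₀ (by positivity)] at this
    rw [div_le_iff₀ (by positivity)]
    linarith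
  have hsmall : ∀ᶠ t in l, r t ^ 2 < M ^ 2 / (4 * G t₀) :=
    (by simpa using h0.pow 2 : Tendsto (fun t => r t ^ 2) l (𝓝 0)).eventually_lt_const
      (by positivity)
  obtain ⟨t, hbounded, hsmall⟩ := (hbounded.and hsmall).exists
  exact hbounded.not_gt hsmall

end Endpoint

namespace EReal

lemma hasBasis_comap_coe_nhdsLT {t : EReal} (ht : t ≠ ⊥) :
    (comap ((↑) : ℝ → EReal) (𝓝[<] t)).HasBasis (· < t) fun a => (↑) ⁻¹' Ioo a t :=
  (nhdsLT_basis_of_exists_lt ⟨⊥, bot_lt_iff_ne_bot.2 ht⟩).comap _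

lemma comap_coe_nhdsLT_neBot {t : EReal} (ht : t ≠ ⊥) :
    (comap ((↑) : ℝ → EReal) (𝓝[<] t)).NeBot :=
  (hasBasis_comap_coe_nhdsLT ht).neBot_iff.2 fun ha => exists_between_coe_real ha

lemma eventually_comap_coe_nhdsLT_gt {t : EReal} {x : ℝ} (hx : (x : EReal) < t) :
    ∀ᶠ y in comap ((↑) : ℝ → EReal) (𝓝[<] t), x < y :=
  mem_of_superset (preimage_mem_comap (Ioo_mem_nhdsLT hx)) fun _ hy =>
    EReal.coe_lt_coe_iff.1 hy.1

lemma convex_preimage_coe_Ioo (a b : EReal) : Convex ℝ ((↑) ⁻¹' Ioo a b : Set ℝ) :=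
  (ordConnected_Ioo.preimage_mono coe_strictMono.monotone).convex

lemma tendsto_neg_comap_coe_nhdsLT (t : EReal) :
    Tendsto Neg.neg (comap ((↑) : ℝ → EReal) (𝓝[<] (-t))) (comap (↑) (𝓝[>] t)) := by
  have hneg : Tendsto (fun x : EReal => -x) (𝓝[<] (-t)) (𝓝[>] t) :=
    tendsto_nhdsWithin_of_tendsto_nhds_of_eventually_within _
      ((continuous_neg.tendsto' _ _ (neg_neg t)).mono_left nhdsWithin_le_nhds)
      (eventually_nhdsWithin_of_forall fun _ hx => EReal.lt_neg_of_lt_neg hx)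
  exact tendsto_comap_iff.2 ((hneg.comp tendsto_comap).congr fun x => (coe_neg x).symm)

end EReal

lemma deriv_deriv_comp_neg (g : ℝ → ℝ) (t : ℝ) :
    deriv (deriv fun s => g (-s)) t = deriv (deriv g) (-t) := by
  rw [funext (deriv_comp_neg g), deriv.fun_neg, deriv_comp_neg, neg_neg]

lemma ContDiffOn.hasDerivAt_deriv_of_isOpen {g : ℝ → ℝ} {s : Set ℝ} {n : WithTop ℕ∞}
    (hg : ContDiffOn ℝ n g s) (hs : IsOpen s) (hn : n ≠ 0) {t : ℝ} (ht : t ∈ s) :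
    HasDerivAt g (deriv g t) t :=
  ((hg.differentiableOn hn).differentiableAt (hs.mem_nhds ht)).hasDerivAt

theorem not_tendsto_zero_comap_coe_nhdsLT_of_radialForce {E ε M c : ℝ} (hM : M ≠ 0)
    {f V : ℝ → ℝ} (hf : ContinuousOn f (Icc 0 1)) (hV : ∀ t, c ≤ V t) {t₂ : EReal}
    (ht₂ : t₂ ≠ ⊥) {I : Set ℝ} (hIo : IsOpen I) (hI : I ∈ comap ((↑) : ℝ → EReal) (𝓝[<] t₂))
    {r : ℝ → ℝ} (hpos : ∀ t ∈ I, 0 < r t) (hr : ContDiffOn ℝ 2 r I)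
    (hode : ∀ t ∈ I, deriv (deriv r) t = radialForce E ε M f V t (r t)) :
    ¬ Tendsto r (comap (↑) (𝓝[<] t₂)) (𝓝 0) := by
  obtain ⟨η, hη, hforce⟩ := exists_pos_centrifugal_le_radialForce E ε hM hf hV
  have := EReal.comap_coe_nhdsLT_neBot ht₂
  have hbasis := EReal.hasBasis_comap_coe_nhdsLT ht₂
  intro h0
  obtain ⟨a, ha, hJ⟩ := hbasis.mem_iff.1 (inter_mem hI (h0 (Iio_mem_nhds hη)))
  have hr' : ContDiffOn ℝ 1 (deriv r) I := hr.deriv_of_isOpen hIo le_rfl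
  refine not_tendsto_zero_of_centrifugal_le hM (EReal.convex_preimage_coe_Ioo a t₂)
    (hbasis.mem_of_mem ha) (fun t ht => EReal.eventually_comap_coe_nhdsLT_gt ht.2)
    (fun t ht => hpos t (hJ ht).1)
    (fun t ht => hr.hasDerivAt_deriv_of_isOpen hIo two_ne_zero (hJ ht).1)
    (fun t ht => hr'.hasDerivAt_deriv_of_isOpen hIo one_ne_zero (hJ ht).1) (fun t ht => ?_) h0
  rw [hode t (hJ ht).1]
  exact hforce t (r t) (hpos t (hJ ht).1) (hJ ht).2

theorem radial_solution_not_tendsto_zero_general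
    (E ε M : ℝ) (hM : M ≠ 0)
    (f : ℝ → ℝ) (hf : ContinuousOn f (Set.Ici 0))
    (V : ℝ → ℝ) (hVbd : ∃ c : ℝ, ∀ t, c ≤ V t)
    (t₁ t₂ : EReal) (h12 : t₁ < t₂)
    (I : Set ℝ) (hI : I = {t : ℝ | t₁ < (t : EReal) ∧ (t : EReal) < t₂})
    (r : ℝ → ℝ) (hrpos : ∀ t ∈ I, 0 < r t)
    (hr : ContDiffOn ℝ 2 r I)
    (hode : ∀ t ∈ I, deriv (deriv r) t
      = 2 * (V t - E) * r t + 2 * ε * f ((r t) ^ 2) * r t + M ^ 2 / (r t) ^ 3) :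
    ¬ Tendsto r ((Filter.comap (fun t : ℝ => (t : EReal)) (𝓝[<] t₂)) ⊓ 𝓟 I) (𝓝 0) ∧
    ¬ Tendsto r ((Filter.comap (fun t : ℝ => (t : EReal)) (𝓝[>] t₁)) ⊓ 𝓟 I) (𝓝 0) := by
  obtain ⟨c, hc⟩ := hVbd
  have hf₀₁ : ContinuousOn f (Icc 0 1) := hf.mono Icc_subset_Ici_self
  have hIo : IsOpen I := hI ▸ isOpen_Ioo.preimage continuous_coe_real_ereal
  have hI₂ : I ∈ comap ((↑) : ℝ → EReal) (𝓝[<] t₂) :=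
    hI ▸ preimage_mem_comap (Ioo_mem_nhdsLT h12)
  have hI₁ : I ∈ comap ((↑) : ℝ → EReal) (𝓝[>] t₁) :=
    hI ▸ preimage_mem_comap (Ioo_mem_nhdsGT h12)
  rw [inf_of_le_left (le_principal_iff.2 hI₂), inf_of_le_left (le_principal_iff.2 hI₁)]
  refine ⟨not_tendsto_zero_comap_coe_nhdsLT_of_radialForce hM hf₀₁ hc h12.ne_bot hIo hI₂
    hrpos hr hode, fun h => ?_⟩
  -- the left endpoint `t₁` of `r` is the right endpoint `-t₁` of `t ↦ r (-t)`
  exact not_tendsto_zero_comap_coe_nhdsLT_of_radialForce (V := fun t => V (-t))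
    (r := fun t => r (-t)) hM hf₀₁ (fun t => hc (-t))
    (EReal.neg_eq_bot_iff.not.2 h12.ne_top) (hIo.preimage continuous_neg)
    (EReal.tendsto_neg_comap_coe_nhdsLT t₁ hI₁) (fun t ht => hrpos _ ht)
    (hr.comp contDiff_neg.contDiffOn fun _ ht => ht)
    (fun t ht => (deriv_deriv_comp_neg r t).trans (hode _ ht))
    (h.comp (EReal.tendsto_neg_comap_coe_nhdsLT t₁))

/-- The radial equation `r'' = 2(V(t) − E) r + 2ε f(r²) r + M²/r³`
with nonzero angular momentum `M` admits no positive solution on an interval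
`(t₁, t₂)` (with possibly infinite endpoints) tending to `0` at either endpoint. -/
theorem radial_solution_not_tendsto_zero
    (E ε M : ℝ) (hM : M ≠ 0)
    (f : ℝ → ℝ) (hf : ContinuousOn f (Set.Ici 0))
    (V : ℝ → ℝ) (hV : Continuous V) (hVbd : ∃ c : ℝ, ∀ t, c ≤ V t)
    (t₁ t₂ : EReal) (h12 : t₁ < t₂)
    (I : Set ℝ) (hI : I = {t : ℝ | t₁ < (t : EReal) ∧ (t : EReal) < t₂})
    (r : ℝ → ℝ) (hrpos : ∀ t ∈ I, 0 < r t)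
    (hr : ContDiffOn ℝ 2 r I)
    (hode : ∀ t ∈ I, deriv (deriv r) t
      = 2 * (V t - E) * r t + 2 * ε * f ((r t) ^ 2) * r t + M ^ 2 / (r t) ^ 3) :
    ¬ Tendsto r ((Filter.comap (fun t : ℝ => (t : EReal)) (𝓝[<] t₂)) ⊓ 𝓟 I) (𝓝 0) ∧
    ¬ Tendsto r ((Filter.comap (fun t : ℝ => (t : EReal)) (𝓝[>] t₁)) ⊓ 𝓟 I) (𝓝 0) :=
  radial_solution_not_tendsto_zero_general E ε M hM f hf V hVbd t₁ t₂ h12 I hI r hrpos hr hode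
end

section
/- Let f : [0,∞) → ℝ be continuous, F(ζ) = ∫₀^ζ f(s) ds, E, ε, λ ∈ ℝ with λ ≠ 0, and let φ : ℝ → ℝ be continuous, nonnegative, and identically zero outside a bounded interval (α, β). Let q : ℝ → ℝ be a C² solution of q''(t) = 2(λφ(t) − E) q(t) + 2ε f(q(t)²) q(t), and define H₀(t) = q'(t)²/2 + E q(t)² − ε F(q(t)²). Assume H₀(α) = 0, that q(t) > 0 and q'(t) > 0 for all t ∈ [α, β], and that ∫_α^β φ(t) q(t) q'(t) dt > 0. Then H₀(β) = 2λ ∫_α^β φ(t) q(t) q'(t) dt ≠ 0, and consequently q(t) does not tend to 0 as t → +∞. -/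
/-!
Along a solution, `dH₀/dt = 2 V q q'`, so `H₀` is conserved where the pulse vanishes and
integrating over `[α, β]` gives `H₀(β) = 2λ ∫ φ q q'`. After the pulse `H₀ ≡ H₀(β)`. If `q → 0`
then `F(q²) → 0`, hence `q'² → 2 H₀(β)`; but `q(t + 1) − q(t) → 0`, and by the mean value theorem
this difference equals some `q'(ξ)`, so the limit of `q'²` must be `0`, contradicting `H₀(β) ≠ 0`.
-/

open Set Filter Topology intervalIntegral

/- `f` is only continuous on `[0, ∞)`; its extension `x ↦ f (max x 0)` is continuous on `ℝ` and has
the same integrals `∫₀^ζ` for `ζ ≥ 0`, so the fundamental theorem of calculus applies to it. -/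
section PrimitiveOnIci

variable {f : ℝ → ℝ}

theorem ContinuousOn.continuous_comp_max_zero (hf : ContinuousOn f (Ici 0)) :
    Continuous fun x => f (max x 0) :=
  hf.comp_continuous (continuous_id.max continuous_const) fun x => le_max_right x 0

theorem integral_comp_max_zero {b : ℝ} (hb : 0 ≤ b) :
    ∫ x in (0 : ℝ)..b, f (max x 0) = ∫ x in (0 : ℝ)..b, f x :=
  integral_congr fun x hx => by
    rw [uIcc_of_le hb] at hx
    rw [max_eq_left hx.1]

theorem hasDerivAt_integral_comp_of_nonneg (hf : ContinuousOn f (Ici 0)) {u : ℝ → ℝ} {u' t : ℝ}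
    (hu : HasDerivAt u u' t) (hu0 : ∀ s, 0 ≤ u s) :
    HasDerivAt (fun s => ∫ x in (0 : ℝ)..u s, f x) (f (u t) * u') t := by
  have h := (hf.continuous_comp_max_zero.integral_hasStrictDerivAt 0 (u t)).hasDerivAt.comp t hu
  simp only [Function.comp_def, integral_comp_max_zero (hu0 _), max_eq_left (hu0 t)] at h
  exact h

theorem tendsto_integral_comp_of_nonneg (hf : ContinuousOn f (Ici 0)) {ι : Type*} {l : Filter ι}
    {u : ι → ℝ} (hu : Tendsto u l (𝓝 0)) (hu0 : ∀ s, 0 ≤ u s) :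
    Tendsto (fun s => ∫ x in (0 : ℝ)..u s, f x) l (𝓝 0) := by
  have h := (hf.continuous_comp_max_zero.integral_hasStrictDerivAt 0 0).hasDerivAt.continuousAt
    |>.tendsto.comp hu
  simpa only [Function.comp_def, integral_comp_max_zero (hu0 _), integral_same] using h

end PrimitiveOnIci

theorem eq_zero_of_tendsto_of_tendsto_deriv_sq {q : ℝ → ℝ} {l a : ℝ} (hq : Differentiable ℝ q)
    (hl : Tendsto q atTop (𝓝 l)) (ha : Tendsto (fun t => deriv q t ^ 2) atTop (𝓝 a)) :
    a = 0 := by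
  have hincr : Tendsto (fun t => (q (t + 1) - q t) ^ 2) atTop (𝓝 0) := by
    have := ((hl.comp (tendsto_atTop_add_const_right _ 1 tendsto_id)).sub hl).pow 2
    simpa using this
  refine le_antisymm (not_lt.1 fun hpos => ?_) (ge_of_tendsto' ha fun t => sq_nonneg _)
  obtain ⟨T, hT⟩ := eventually_atTop.1 (ha.eventually (eventually_gt_nhds (half_lt_self hpos)))
  have hmvt : ∀ t ≥ T, a / 2 < (q (t + 1) - q t) ^ 2 := fun t ht => by
    obtain ⟨ξ, hξ, hslope⟩ := exists_deriv_eq_slope q (lt_add_one t) hq.continuous.continuousOn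
      hq.differentiableOn
    rw [add_sub_cancel_left, div_one] at hslope
    exact hslope ▸ hT ξ (ht.trans hξ.1.le)
  have := ge_of_tendsto hincr (eventually_atTop.2 ⟨T, fun t ht => (hmvt t ht).le⟩)
  linarith

/-- The paper's `H₀ = q'²/2 + E q² − ε F(q²)` with `F(ζ) = ∫₀^ζ f`. -/
noncomputable def freeEnergy (f : ℝ → ℝ) (E ε : ℝ) (q : ℝ → ℝ) (t : ℝ) : ℝ :=
  deriv q t ^ 2 / 2 + E * q t ^ 2 - ε * ∫ x in (0 : ℝ)..q t ^ 2, f x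

section FreeEnergy

variable {f q : ℝ → ℝ} {E ε : ℝ}

theorem hasDerivAt_freeEnergy (hf : ContinuousOn f (Ici 0)) (hq : ContDiff ℝ 2 q) {V : ℝ → ℝ}
    {t : ℝ} (hode : deriv (deriv q) t = 2 * (V t - E) * q t + 2 * ε * f (q t ^ 2) * q t) :
    HasDerivAt (freeEnergy f E ε q) (2 * V t * q t * deriv q t) t := by
  have hq1 : HasDerivAt q (deriv q t) t := (hq.differentiable two_ne_zero t).hasDerivAt
  have hq2 : HasDerivAt (deriv q) (deriv (deriv q) t) t :=
    ((hq.iterate_deriv' 1 1).differentiable one_ne_zero t).hasDerivAt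
  have hsq : HasDerivAt (fun s => q s ^ 2) (2 * q t * deriv q t) t := by
    simpa [mul_comm, mul_assoc] using hq1.fun_pow 2
  have hF := hasDerivAt_integral_comp_of_nonneg hf hsq fun s => sq_nonneg (q s)
  refine (((hq2.fun_pow 2).div_const 2).fun_add (hsq.const_mul E)).fun_sub (hF.const_mul ε)
    |>.congr_deriv ?_
  rw [hode]
  ring

theorem tendsto_deriv_sq_of_tendsto_freeEnergy (hf : ContinuousOn f (Ici 0)) {c : ℝ}
    (hq : Tendsto q atTop (𝓝 0)) (hH : Tendsto (freeEnergy f E ε q) atTop (𝓝 c)) :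
    Tendsto (fun t => deriv q t ^ 2) atTop (𝓝 (2 * c)) := by
  have hq2 : Tendsto (fun t => q t ^ 2) atTop (𝓝 0) := by simpa using hq.pow 2
  have hF := tendsto_integral_comp_of_nonneg hf hq2 fun t => sq_nonneg (q t)
  convert ((hH.const_mul 2).sub (hq2.const_mul (2 * E))).add (hF.const_mul (2 * ε)) using 1
  · ext t
    simp only [freeEnergy]
    ring
  · simp

end FreeEnergy

theorem eq_of_hasDerivAt_zero_on_Icc {H : ℝ → ℝ} {a b : ℝ} (hab : a ≤ b)
    (hH : ∀ x ∈ Icc a b, HasDerivAt H 0 x) : H b = H a := by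
  have h := integral_eq_sub_of_hasDerivAt (fun x hx => hH x (uIcc_of_le hab ▸ hx))
    (intervalIntegrable_const (c := (0 : ℝ)))
  rw [integral_zero] at h
  linarith

theorem potential_pulse_destroys_macrostate_general
    (f : ℝ → ℝ) (hf : ContinuousOn f (Set.Ici 0))
    (F : ℝ → ℝ) (hF : ∀ ζ : ℝ, F ζ = ∫ s in (0 : ℝ)..ζ, f s)
    (E ε lam : ℝ) (hlam : lam ≠ 0)
    (α β : ℝ)
    (φ : ℝ → ℝ) (hφc : Continuous φ)
    (hφsupp : ∀ t ∉ Set.Ioo α β, φ t = 0)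
    (q : ℝ → ℝ) (hq : ContDiff ℝ 2 q)
    (hode : ∀ t : ℝ, deriv (deriv q) t
      = 2 * (lam * φ t - E) * q t + 2 * ε * f ((q t) ^ 2) * q t)
    (H₀ : ℝ → ℝ)
    (hH₀ : ∀ t : ℝ, H₀ t = (deriv q t) ^ 2 / 2 + E * (q t) ^ 2 - ε * F ((q t) ^ 2))
    (hHα : H₀ α = 0)
    (hint : 0 < ∫ t in α..β, φ t * q t * deriv q t) :
    (H₀ β = 2 * lam * ∫ t in α..β, φ t * q t * deriv q t) ∧ H₀ β ≠ 0 ∧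
      ¬ Tendsto q atTop (𝓝 0) := by
  obtain rfl : H₀ = freeEnergy f E ε q := funext fun t => by rw [hH₀, hF, freeEnergy]
  have hH' (t : ℝ) := hasDerivAt_freeEnergy (V := fun s => lam * φ s) hf hq (hode t)
  have hβ : freeEnergy f E ε q β = 2 * lam * ∫ t in α..β, φ t * q t * deriv q t := by
    have hq_cont : Continuous q := hq.continuous
    have hq'_cont : Continuous (deriv q) := hq.continuous_deriv one_le_two
    have hcont : Continuous fun t => 2 * (lam * φ t) * q t * deriv q t := by fun_prop
    rw [← sub_zero (freeEnergy f E ε q β), ← hHα,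
      ← integral_eq_sub_of_hasDerivAt (fun t _ => hH' t) (hcont.intervalIntegrable α β),
      ← integral_const_mul]
    congr 1 with t
    ring
  have hne : freeEnergy f E ε q β ≠ 0 := hβ ▸ mul_ne_zero (mul_ne_zero two_ne_zero hlam) hint.ne'
  refine ⟨hβ, hne, fun hq0 => hne ?_⟩
  have hconst (t : ℝ) (ht : β ≤ t) : freeEnergy f E ε q t = freeEnergy f E ε q β :=
    eq_of_hasDerivAt_zero_on_Icc ht fun x hx => by
      simpa [hφsupp x fun h => h.2.not_ge hx.1] using hH' x
  have hlim := tendsto_deriv_sq_of_tendsto_freeEnergy hf hq0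
    (tendsto_const_nhds.congr' (eventually_atTop.2 ⟨β, fun t ht => (hconst t ht).symm⟩))
  simpa using eq_zero_of_tendsto_of_tendsto_deriv_sq (hq.differentiable two_ne_zero) hq0 hlim

/-- A potential pulse `V(t) = λφ(t)` supported in `(α, β)` under a rising
cue of a macrostate (`H₀(α) = 0`, `q, q' > 0` on `[α, β]`) pushes the free energy
`H₀ = q'²/2 + Eq² − εF(q²)` off the zero level: `H₀(β) = 2λ∫φ q q' ≠ 0`, so the
trajectory can no longer vanish at `+∞`. -/
theorem potential_pulse_destroys_macrostate
    (f : ℝ → ℝ) (hf : ContinuousOn f (Set.Ici 0))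
    (F : ℝ → ℝ) (hF : ∀ ζ : ℝ, F ζ = ∫ s in (0 : ℝ)..ζ, f s)
    (E ε lam : ℝ) (hlam : lam ≠ 0)
    (α β : ℝ) (hαβ : α < β)
    (φ : ℝ → ℝ) (hφc : Continuous φ) (hφ0 : ∀ t, 0 ≤ φ t)
    (hφsupp : ∀ t ∉ Set.Ioo α β, φ t = 0)
    (q : ℝ → ℝ) (hq : ContDiff ℝ 2 q)
    (hode : ∀ t : ℝ, deriv (deriv q) t
      = 2 * (lam * φ t - E) * q t + 2 * ε * f ((q t) ^ 2) * q t)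
    (H₀ : ℝ → ℝ)
    (hH₀ : ∀ t : ℝ, H₀ t = (deriv q t) ^ 2 / 2 + E * (q t) ^ 2 - ε * F ((q t) ^ 2))
    (hHα : H₀ α = 0)
    (hqpos : ∀ t ∈ Set.Icc α β, 0 < q t ∧ 0 < deriv q t)
    (hint : 0 < ∫ t in α..β, φ t * q t * deriv q t) :
    (H₀ β = 2 * lam * ∫ t in α..β, φ t * q t * deriv q t) ∧ H₀ β ≠ 0 ∧
      ¬ Tendsto q atTop (𝓝 0) :=
  potential_pulse_destroys_macrostate_general f hf F hF E ε lam hlam α β φ hφc hφsupp q hq hode H₀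
    hH₀ hHα hint
end

section
/- Let E < 0, ε > 0 and t₀ ∈ ℝ, and let q : [t₀, ∞) → (0, ∞) be a C¹ solution of q'(t) = −√(−2E q(t)² + ε q(t)⁴) with q(t₀) = q_a > 0. Then q(t) → 0 as t → +∞ and ∫_{t₀}^∞ q(t)² dt = (√2/ε) ( √(|E| + ε q_a²/2) − √(|E|) ). -/
/-!
Write `a = -2E = 2|E|`, so that the cue equation reads `q' = -q √(a + ε q²)`. Along it
`d/dt √(a + ε q²) = -ε q²`, hence `∫_{t₀}^T q² = (√(a + ε q(t₀)²) - √(a + ε q(T)²)) / ε`, and the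
norm follows by letting `T → ∞` once `q → 0`. The decay comes from `q' ≤ -√a q`, which makes
`q(t) e^{√a t}` nonincreasing.
-/

open Set Filter Topology MeasureTheory

theorem Real.sqrt_mul_sq_add_mul_pow_four {x : ℝ} (hx : 0 ≤ x) (a ε : ℝ) :
    √(a * x ^ 2 + ε * x ^ 4) = x * √(a + ε * x ^ 2) := by
  rw [show a * x ^ 2 + ε * x ^ 4 = x ^ 2 * (a + ε * x ^ 2) by ring,
    Real.sqrt_mul (sq_nonneg x), Real.sqrt_sq hx]

theorem tendsto_zero_of_hasDerivWithinAt_le_neg_mul {f f' : ℝ → ℝ} {t₀ c : ℝ} (hc : 0 < c)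
    (hf₀ : ∀ t ∈ Ici t₀, 0 ≤ f t)
    (hf : ∀ t ∈ Ici t₀, HasDerivWithinAt f (f' t) (Ici t₀) t)
    (hf' : ∀ t ∈ Ici t₀, f' t ≤ -c * f t) :
    Tendsto f atTop (𝓝 0) := by
  have hφ : ∀ t ∈ Ici t₀, HasDerivWithinAt (fun t ↦ f t * Real.exp (c * t))
      ((f' t + c * f t) * Real.exp (c * t)) (Ici t₀) t := fun t ht ↦
    ((hf t ht).mul ((hasDerivAt_id t).const_mul c).exp.hasDerivWithinAt).congr_deriv
      (by simp only [id_eq, mul_one]; ring)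
  have hanti : AntitoneOn (fun t ↦ f t * Real.exp (c * t)) (Ici t₀) := by
    refine antitoneOn_of_hasDerivWithinAt_nonpos (convex_Ici t₀)
      (f' := fun t ↦ (f' t + c * f t) * Real.exp (c * t))
      (fun t ht ↦ (hφ t ht).continuousWithinAt) (fun t ht ↦ ?_) (fun t ht ↦ ?_)
    · rw [interior_Ici] at ht ⊢
      exact (hφ t (mem_Ici_of_Ioi ht)).mono Ioi_subset_Ici_self
    · rw [interior_Ici] at ht
      exact mul_nonpos_of_nonpos_of_nonneg (by linarith [hf' t (mem_Ici_of_Ioi ht)])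
        (Real.exp_pos _).le
  have hbound : ∀ᶠ t in atTop, f t ≤ f t₀ * Real.exp (c * t₀) * Real.exp (-c * t) := by
    filter_upwards [eventually_ge_atTop t₀] with t ht
    rw [neg_mul, Real.exp_neg, ← div_eq_mul_inv, le_div_iff₀ (Real.exp_pos _)]
    exact hanti self_mem_Ici ht ht
  have hexp : Tendsto (fun t ↦ f t₀ * Real.exp (c * t₀) * Real.exp (-c * t)) atTop (𝓝 0) := by
    simpa using (Real.tendsto_exp_atBot.comp
      (tendsto_id.const_mul_atTop_of_neg (neg_neg_of_pos hc))).const_mul (f t₀ * Real.exp (c * t₀))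
  exact tendsto_of_tendsto_of_tendsto_of_le_of_le' tendsto_const_nhds hexp
    (eventually_atTop.2 ⟨t₀, hf₀⟩) hbound

section CueEquation

variable {q : ℝ → ℝ} {t₀ a ε : ℝ}

theorem tendsto_zero_of_hasDerivWithinAt_neg_mul_sqrt (ha : 0 < a) (hε : 0 ≤ ε)
    (hq₀ : ∀ t ∈ Ici t₀, 0 ≤ q t)
    (hq : ∀ t ∈ Ici t₀, HasDerivWithinAt q (-(q t * √(a + ε * q t ^ 2))) (Ici t₀) t) :
    Tendsto q atTop (𝓝 0) := by
  refine tendsto_zero_of_hasDerivWithinAt_le_neg_mul (Real.sqrt_pos.2 ha) hq₀ hq fun t ht ↦ ?_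
  have : √a ≤ √(a + ε * q t ^ 2) := Real.sqrt_le_sqrt (by nlinarith [sq_nonneg (q t)])
  nlinarith [hq₀ t ht]

theorem hasDerivWithinAt_neg_sqrt_add_mul_sq_div {s : Set ℝ} {t : ℝ} (hε : ε ≠ 0)
    (hpos : 0 < a + ε * q t ^ 2)
    (hq : HasDerivWithinAt q (-(q t * √(a + ε * q t ^ 2))) s t) :
    HasDerivWithinAt (fun t ↦ -√(a + ε * q t ^ 2) / ε) (q t ^ 2) s t := by
  have hsqrt := (((hq.pow 2).const_mul ε).const_add a).sqrt hpos.ne'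
  simp only [Pi.pow_apply] at hsqrt
  refine (hsqrt.neg.div_const ε).congr_deriv ?_
  field_simp
  ring

theorem integral_Ioi_sq_of_hasDerivWithinAt (ha : 0 < a) (hε : 0 < ε)
    (hq : ∀ t ∈ Ici t₀, HasDerivWithinAt q (-(q t * √(a + ε * q t ^ 2))) (Ici t₀) t)
    (hlim : Tendsto q atTop (𝓝 0)) :
    ∫ t in Ioi t₀, q t ^ 2 = (√(a + ε * q t₀ ^ 2) - √a) / ε := by
  have hpos : ∀ t, 0 < a + ε * q t ^ 2 := fun t ↦ by positivity
  have hG : ∀ t ∈ Ici t₀, HasDerivWithinAt (fun t ↦ -√(a + ε * q t ^ 2) / ε) (q t ^ 2)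
      (Ici t₀) t := fun t ht ↦ hasDerivWithinAt_neg_sqrt_add_mul_sq_div hε.ne' (hpos t) (hq t ht)
  have hGlim : Tendsto (fun t ↦ -√(a + ε * q t ^ 2) / ε) atTop (𝓝 (-√a / ε)) := by
    simpa using ((((hlim.pow 2).const_mul ε).const_add a).sqrt.neg).div_const ε
  rw [integral_Ioi_of_hasDerivAt_of_nonneg (hG t₀ self_mem_Ici).continuousWithinAt
    (fun t ht ↦ (hG t (mem_Ici_of_Ioi ht)).hasDerivAt (Ici_mem_nhds ht))
    (fun t _ ↦ sq_nonneg (q t)) hGlim]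
  ring

end CueEquation

theorem zakharov_cue_norm_general
    (E ε t₀ q_a : ℝ) (hE : E < 0) (hε : 0 < ε)
    (q : ℝ → ℝ) (hqpos : ∀ t ∈ Set.Ici t₀, 0 < q t)
    (hq : ∀ t ∈ Set.Ici t₀, HasDerivWithinAt q
      (-Real.sqrt (-(2 * E) * (q t) ^ 2 + ε * (q t) ^ 4)) (Set.Ici t₀) t)
    (hinit : q t₀ = q_a) :
    Tendsto q atTop (𝓝 0) ∧
    ∫ t in Set.Ici t₀, (q t) ^ 2
      = (Real.sqrt 2 / ε) * (Real.sqrt (|E| + ε * q_a ^ 2 / 2) - Real.sqrt |E|) := by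
  have ha : 0 < -(2 * E) := by linarith
  have hcue : ∀ t ∈ Ici t₀,
      HasDerivWithinAt q (-(q t * √(-(2 * E) + ε * q t ^ 2))) (Ici t₀) t := fun t ht ↦ by
    simpa only [Real.sqrt_mul_sq_add_mul_pow_four (hqpos t ht).le] using hq t ht
  have hlim := tendsto_zero_of_hasDerivWithinAt_neg_mul_sqrt ha hε.le
    (fun t ht ↦ (hqpos t ht).le) hcue
  refine ⟨hlim, ?_⟩
  rw [integral_Ici_eq_integral_Ioi, integral_Ioi_sq_of_hasDerivWithinAt ha hε hcue hlim, hinit,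
    abs_of_neg hE]
  have hsplit : ∀ x, √(2 * x) = √2 * √x := Real.sqrt_mul zero_le_two
  rw [show -(2 * E) + ε * q_a ^ 2 = 2 * (-E + ε * q_a ^ 2 / 2) by ring,
    show -(2 * E) = 2 * -E by ring, hsplit, hsplit]
  ring

/-- For the Zakharov nonlinearity, a right-vanishing cue
`q' = −√(−2Eq² + εq⁴)` with `q(t₀) = q_a > 0` tends to `0` at `+∞` and contributes
`(√2/ε)(√(|E| + εq_a²/2) − √|E|)` to the squared `L²` norm. -/
theorem zakharov_cue_norm
    (E ε t₀ q_a : ℝ) (hE : E < 0) (hε : 0 < ε) (hqa : 0 < q_a)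
    (q : ℝ → ℝ) (hqpos : ∀ t ∈ Set.Ici t₀, 0 < q t)
    (hq : ∀ t ∈ Set.Ici t₀, HasDerivWithinAt q
      (-Real.sqrt (-(2 * E) * (q t) ^ 2 + ε * (q t) ^ 4)) (Set.Ici t₀) t)
    (hinit : q t₀ = q_a) :
    Tendsto q atTop (𝓝 0) ∧
    ∫ t in Set.Ici t₀, (q t) ^ 2
      = (Real.sqrt 2 / ε) * (Real.sqrt (|E| + ε * q_a ^ 2 / 2) - Real.sqrt |E|) :=
  zakharov_cue_norm_general E ε t₀ q_a hE hε q hqpos hq hinit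
end

section
/- Let Ω > 0, ε ≠ 0, E < 0 and q₀ > 0 satisfy E = −Ω²/2 + ε q₀²/2 and (4/(ε√2)) ( √(−E + ε q₀²/2) − √(−E) ) = 1. Then √(−2E) = Ω − ε/2; consequently E = −(1/2)(Ω − ε/2)² and necessarily ε ≤ 2Ω. -/
/-! With `E = −Ω²/2 + εq₀²/2` the first root in the norm is `√(Ω²/2) = Ω/√2`, so the unit-norm
condition is linear in `√(−E)` and gives `√2·√(−E) = Ω − ε/2`. This is `√(−2E)`, and squaring it
recovers `E`; as a square root it is nonnegative, whence `ε ≤ 2Ω`. -/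

lemma Real.sqrt_sq_div_two {a : ℝ} (ha : 0 ≤ a) : √(a ^ 2 / 2) = a / √2 := by
  rw [Real.sqrt_div (sq_nonneg a), Real.sqrt_sq ha]

lemma sqrt_two_mul_eq_of_unit_norm {Ω ε s : ℝ} (hΩ : 0 ≤ Ω) (hε : ε ≠ 0)
    (h : 4 / (ε * √2) * (√(Ω ^ 2 / 2) - s) = 1) : √2 * s = Ω - ε / 2 := by
  have hsqrt2 : √2 ≠ 0 := by positivity
  rw [Real.sqrt_sq_div_two hΩ] at h
  field_simp at h
  rw [Real.sq_sqrt zero_le_two] at h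
  linarith

theorem zakharov_delta_well_unit_norm_eigenvalue_general
    (Ω ε E q₀ : ℝ) (hΩ : 0 < Ω) (hε : ε ≠ 0) (hE : E < 0)
    (heig : E = -Ω ^ 2 / 2 + ε * q₀ ^ 2 / 2)
    (hnorm : (4 / (ε * Real.sqrt 2)) *
      (Real.sqrt (-E + ε * q₀ ^ 2 / 2) - Real.sqrt (-E)) = 1) :
    Real.sqrt (-(2 * E)) = Ω - ε / 2 ∧
    E = -(1 / 2) * (Ω - ε / 2) ^ 2 ∧ ε ≤ 2 * Ω := by
  have hwell : -E + ε * q₀ ^ 2 / 2 = Ω ^ 2 / 2 := by linarith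
  rw [hwell] at hnorm
  have hroot : √(-(2 * E)) = Ω - ε / 2 := by
    rw [← mul_neg, Real.sqrt_mul zero_le_two]
    exact sqrt_two_mul_eq_of_unit_norm hΩ.le hε hnorm
  have hsq : -(2 * E) = (Ω - ε / 2) ^ 2 := by
    rw [← hroot, Real.sq_sqrt (by linarith)]
  have hnonneg : 0 ≤ Ω - ε / 2 := hroot ▸ Real.sqrt_nonneg _
  exact ⟨hroot, by linarith, by linarith⟩

/-- For the Zakharov equation with the delta well `V = −Ωδ`, the
eigenvalue relation `E = −Ω²/2 + εq₀²/2` together with the unit-norm condition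
`(4/(ε√2))(√(−E + εq₀²/2) − √(−E)) = 1` forces `√(−2E) = Ω − ε/2`, hence
`E = −(1/2)(Ω − ε/2)²` and necessarily `ε ≤ 2Ω`. -/
theorem zakharov_delta_well_unit_norm_eigenvalue
    (Ω ε E q₀ : ℝ) (hΩ : 0 < Ω) (hε : ε ≠ 0) (hE : E < 0) (hq₀ : 0 < q₀)
    (heig : E = -Ω ^ 2 / 2 + ε * q₀ ^ 2 / 2)
    (hnorm : (4 / (ε * Real.sqrt 2)) *
      (Real.sqrt (-E + ε * q₀ ^ 2 / 2) - Real.sqrt (-E)) = 1) :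
    Real.sqrt (-(2 * E)) = Ω - ε / 2 ∧
    E = -(1 / 2) * (Ω - ε / 2) ^ 2 ∧ ε ≤ 2 * Ω :=
  zakharov_delta_well_unit_norm_eigenvalue_general Ω ε E q₀ hΩ hε hE heig hnorm
end

section
/- Let ε < 0 and E ∈ ℝ, and define ψ_G : ℝ → ℝ by ψ_G(x) = exp( (E + ε)/(2ε) + ε x² ). Then ψ_G is a C² positive function satisfying −½ψ_G''(x) − E ψ_G(x) + ε · ln(ψ_G(x)²) · ψ_G(x) = 0 for all x ∈ ℝ, ψ_G(x) → 0 as x → ±∞, and ∫_{−∞}^{∞} ψ_G(x)² dx < ∞. -/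
/-
The gausson is `exp q` for the quadratic `q x = c + ε x²`, so `ψ'' = (2ε + (2εx)²) ψ` while
`ε ln(ψ²) ψ = 2ε q ψ`; the `x²` terms cancel and what remains vanishes exactly when
`2εc = E + ε`, which is how `c` is chosen. Decay and square integrability come from
`ε < 0`, since `ψ²` is again a Gaussian `exp (2c + 2ε x²)`.
-/

open Set Filter Topology MeasureTheory

section GaussianExp

variable (c a : ℝ)

theorem hasDerivAt_exp_add_mul_sq (x : ℝ) :
    HasDerivAt (fun x => Real.exp (c + a * x ^ 2)) (2 * a * x * Real.exp (c + a * x ^ 2)) x := by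
  have hq : HasDerivAt (fun x => c + a * x ^ 2) (2 * a * x) x := by
    simpa [mul_comm, mul_left_comm, mul_assoc] using ((hasDerivAt_pow 2 x).const_mul a).const_add c
  simpa [mul_comm] using hq.exp

theorem deriv_exp_add_mul_sq :
    deriv (fun x => Real.exp (c + a * x ^ 2)) = fun x => 2 * a * x * Real.exp (c + a * x ^ 2) :=
  funext fun x => (hasDerivAt_exp_add_mul_sq c a x).deriv

theorem deriv_deriv_exp_add_mul_sq (x : ℝ) :
    deriv (deriv fun x => Real.exp (c + a * x ^ 2)) x
      = (2 * a + (2 * a * x) ^ 2) * Real.exp (c + a * x ^ 2) := by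
  rw [deriv_exp_add_mul_sq]
  have h : HasDerivAt (fun x => 2 * a * x * Real.exp (c + a * x ^ 2))
      (2 * a * 1 * Real.exp (c + a * x ^ 2) + 2 * a * x * (2 * a * x * Real.exp (c + a * x ^ 2))) x :=
    ((hasDerivAt_id x).const_mul (2 * a)).mul (hasDerivAt_exp_add_mul_sq c a x)
  rw [h.deriv]
  ring

theorem contDiff_exp_add_mul_sq {n : WithTop ℕ∞} :
    ContDiff ℝ n fun x => Real.exp (c + a * x ^ 2) := by
  fun_prop

variable {a}

theorem tendsto_exp_add_mul_sq_atTop (ha : a < 0) :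
    Tendsto (fun x => Real.exp (c + a * x ^ 2)) atTop (𝓝 0) :=
  Real.tendsto_exp_atBot.comp <|
    tendsto_atBot_add_const_left _ c (tendsto_const_mul_pow_atBot_iff.2 ⟨two_ne_zero, ha⟩)

theorem tendsto_exp_add_mul_sq_atBot (ha : a < 0) :
    Tendsto (fun x => Real.exp (c + a * x ^ 2)) atBot (𝓝 0) := by
  simpa [Function.comp_def] using
    (tendsto_exp_add_mul_sq_atTop c ha).comp tendsto_neg_atBot_atTop

theorem integrable_exp_add_mul_sq (ha : a < 0) :
    Integrable fun x => Real.exp (c + a * x ^ 2) := by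
  refine ((integrable_exp_neg_mul_sq (neg_pos.2 ha)).const_mul (Real.exp c)).congr ?_
  filter_upwards with x
  rw [← Real.exp_add, neg_neg]

end GaussianExp

theorem exp_add_mul_sq_sq (c a x : ℝ) :
    Real.exp (c + a * x ^ 2) ^ 2 = Real.exp (2 * c + 2 * a * x ^ 2) := by
  rw [sq, ← Real.exp_add]
  ring_nf

theorem gausson_equation {ε E c : ℝ} (hc : 2 * ε * c = E + ε) (x : ℝ) :
    -(1 / 2) * deriv (deriv fun x => Real.exp (c + ε * x ^ 2)) x - E * Real.exp (c + ε * x ^ 2)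
      + ε * Real.log (Real.exp (c + ε * x ^ 2) ^ 2) * Real.exp (c + ε * x ^ 2) = 0 := by
  rw [deriv_deriv_exp_add_mul_sq, exp_add_mul_sq_sq, Real.log_exp]
  linear_combination Real.exp (c + ε * x ^ 2) * hc

/-- The gausson `ψ_G(x) = exp((E + ε)/(2ε) + εx²)` (for `ε < 0`) is a
positive `C²` solution of the logarithmic nonlinear Schrödinger equation
`−½ψ'' − Eψ + ε ln(ψ²) ψ = 0`, vanishes at `±∞`, and is square integrable. -/
theorem gausson_is_macrostate
    (ε E : ℝ) (hε : ε < 0)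
    (ψ : ℝ → ℝ)
    (hψ : ∀ x : ℝ, ψ x = Real.exp ((E + ε) / (2 * ε) + ε * x ^ 2)) :
    ContDiff ℝ 2 ψ ∧ (∀ x : ℝ, 0 < ψ x) ∧
    (∀ x : ℝ, -(1 / 2) * deriv (deriv ψ) x - E * ψ x
      + ε * Real.log ((ψ x) ^ 2) * ψ x = 0) ∧
    Tendsto ψ atTop (𝓝 0) ∧ Tendsto ψ atBot (𝓝 0) ∧
    Integrable (fun x : ℝ => (ψ x) ^ 2) := by
  obtain rfl : ψ = fun x => Real.exp ((E + ε) / (2 * ε) + ε * x ^ 2) := funext hψ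
  refine ⟨contDiff_exp_add_mul_sq _ _, fun x => Real.exp_pos _,
    gausson_equation (mul_div_cancel₀ _ (by linarith)),
    tendsto_exp_add_mul_sq_atTop _ hε, tendsto_exp_add_mul_sq_atBot _ hε, ?_⟩
  simp only [exp_add_mul_sq_sq]
  exact integrable_exp_add_mul_sq _ (by linarith)
end

section
/- Let E ∈ ℝ, ε ∈ ℝ, b > 0 and V₀ ≠ 0, and let q : [−b, b] → ℝ be a C² solution of q''(t) = 2(V₀ − E) q(t) + 2ε q(t)³ satisfying the cue-matching conditions q'(−b)² = −2E q(−b)² + ε q(−b)⁴ and q'(b)² = −2E q(b)² + ε q(b)⁴. Then q(b)² = q(−b)². -/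
open Set

/-!
On `[-b, b]` the inner Hamiltonian `H = p²/2 + (E - V₀) q² - ε q⁴ / 2` is a first integral of
`q' = p, p' = 2(V₀ - E) q + 2ε q³`, so it takes the same value at both endpoints. On the cue
line `p² = -2E q² + ε q⁴` it reduces to `-V₀ q²`, hence `V₀ q(b)² = V₀ q(-b)²`.
-/

noncomputable def zakharovHamiltonian (E ε V q p : ℝ) : ℝ :=
  p ^ 2 / 2 + (E - V) * q ^ 2 - ε / 2 * q ^ 4

theorem hasDerivWithinAt_zakharovHamiltonian {E ε V : ℝ} {q p : ℝ → ℝ} {s : Set ℝ} {t : ℝ}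
    (hq : HasDerivWithinAt q (p t) s t)
    (hp : HasDerivWithinAt p (2 * (V - E) * q t + 2 * ε * q t ^ 3) s t) :
    HasDerivWithinAt (fun t ↦ zakharovHamiltonian E ε V (q t) (p t)) 0 s t := by
  refine ((((hp.fun_pow 2).div_const 2).add ((hq.fun_pow 2).const_mul (E - V))).sub
    ((hq.fun_pow 4).const_mul (ε / 2))).congr_deriv ?_
  push_cast
  ring

theorem zakharovHamiltonian_right_eq_left {E ε V a b : ℝ} (hab : a ≤ b) {q p : ℝ → ℝ}
    (hq : ∀ t ∈ Icc a b, HasDerivWithinAt q (p t) (Icc a b) t)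
    (hp : ∀ t ∈ Icc a b,
      HasDerivWithinAt p (2 * (V - E) * q t + 2 * ε * q t ^ 3) (Icc a b) t) :
    zakharovHamiltonian E ε V (q b) (p b) = zakharovHamiltonian E ε V (q a) (p a) := by
  have hH : ∀ t ∈ Icc a b, HasDerivWithinAt
      (fun t ↦ zakharovHamiltonian E ε V (q t) (p t)) 0 (Icc a b) t := fun t ht ↦
    hasDerivWithinAt_zakharovHamiltonian (hq t ht) (hp t ht)
  refine constant_of_has_deriv_right_zero (fun t ht ↦ (hH t ht).continuousWithinAt)
    (fun t ht ↦ ?_) b (right_mem_Icc.2 hab)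
  exact (hH t (mem_Icc_of_Ico ht)).mono_of_mem_nhdsWithin (Icc_mem_nhdsGE_of_mem ht)

theorem zakharovHamiltonian_of_cue {E ε V q p : ℝ} (h : p ^ 2 = -(2 * E) * q ^ 2 + ε * q ^ 4) :
    zakharovHamiltonian E ε V q p = -V * q ^ 2 := by
  unfold zakharovHamiltonian
  rw [h]
  ring

/-- For the Zakharov equation in a rectangular well of depth `V₀ ≠ 0`
on `[−b, b]`, a solution of `q'' = 2(V₀ − E)q + 2εq³` matching the vanishing cues at both
endpoints (`q'(±b)² = −2Eq(±b)² + εq(±b)⁴`) has equal endpoint amplitudes: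
`q(b)² = q(−b)²`. -/
theorem zakharov_square_well_endpoint_parity
    (E ε b V₀ : ℝ) (hb : 0 < b) (hV₀ : V₀ ≠ 0)
    (q p : ℝ → ℝ)
    (hq : ∀ t ∈ Set.Icc (-b) b, HasDerivWithinAt q (p t) (Set.Icc (-b) b) t)
    (hp : ∀ t ∈ Set.Icc (-b) b, HasDerivWithinAt p
      (2 * (V₀ - E) * q t + 2 * ε * (q t) ^ 3) (Set.Icc (-b) b) t)
    (h₁ : (p (-b)) ^ 2 = -(2 * E) * (q (-b)) ^ 2 + ε * (q (-b)) ^ 4)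
    (h₂ : (p b) ^ 2 = -(2 * E) * (q b) ^ 2 + ε * (q b) ^ 4) :
    (q b) ^ 2 = (q (-b)) ^ 2 := by
  have hconserved := zakharovHamiltonian_right_eq_left (by linarith) hq hp
  rw [zakharovHamiltonian_of_cue h₁, zakharovHamiltonian_of_cue h₂] at hconserved
  exact mul_left_cancel₀ (neg_ne_zero.2 hV₀) hconserved
end
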